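/- arXiv:0903.2434 — 6 statements merged into one kernel-verified Lean document; each statement's English description precedes it below -/
import Mathlib

section
/- Every symmetric lattice polynomial function p : ℝⁿ → ℝ is an order statistic: there exists k ∈ [n] such that p(x) = x_{(k)} for all x ∈ ℝⁿ. -/
/-!
A lattice polynomial commutes with every monotone map `f` applied coordinatewise, and at each
point it takes the value of one of the coordinates. By symmetry `p x = p y` for the sorted
rearrangement `y` of `x`. Writing `y = f ∘ v` with `v i = i` and `f` monotone, we get
`p y = f (p v) = f (v k) = y k`, where the index `k` with `p v = v k` does not depend on `x`.
-/

/-- Lattice polynomial functions: built from projections by pointwise min and max. -/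
inductive IsLatticePoly {α : Type*} [LinearOrder α] (n : ℕ) : ((Fin n → α) → α) → Prop
  | proj (k : Fin n) : IsLatticePoly n (fun x => x k)
  | inf {p q : (Fin n → α) → α} : IsLatticePoly n p → IsLatticePoly n q →
      IsLatticePoly n (fun x => min (p x) (q x))
  | sup {p q : (Fin n → α) → α} : IsLatticePoly n p → IsLatticePoly n q →
      IsLatticePoly n (fun x => max (p x) (q x))

/-- The `k`-th order statistic. -/
def orderStat {α : Type*} [LinearOrder α] {n : ℕ} (x : Fin n → α) (k : Fin n) : α :=
  x (Tuple.sort x k)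

namespace IsLatticePoly

variable {α : Type*} [LinearOrder α] {n : ℕ} {p : (Fin n → α) → α}

theorem exists_apply_eq (hp : IsLatticePoly n p) (x : Fin n → α) : ∃ k, p x = x k := by
  induction hp with
  | proj k => exact ⟨k, rfl⟩
  | inf _ _ ihp ihq =>
    obtain ⟨k, hk⟩ := ihp
    obtain ⟨l, hl⟩ := ihq
    simp only [hk, hl]
    rcases min_choice (x k) (x l) with h | h
    exacts [⟨k, h⟩, ⟨l, h⟩]
  | sup _ _ ihp ihq =>
    obtain ⟨k, hk⟩ := ihp
    obtain ⟨l, hl⟩ := ihq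
    simp only [hk, hl]
    rcases max_choice (x k) (x l) with h | h
    exacts [⟨k, h⟩, ⟨l, h⟩]

theorem apply_comp_of_monotone (hp : IsLatticePoly n p) {f : α → α} (hf : Monotone f)
    (x : Fin n → α) : p (f ∘ x) = f (p x) := by
  induction hp with
  | proj k => rfl
  | inf _ _ ihp ihq => simp only [ihp, ihq, hf.map_min]
  | sup _ _ ihp ihq => simp only [ihp, ihq, hf.map_max]

end IsLatticePoly

theorem Monotone.comp_clamp_floor {β : Type*} [Preorder β] {m : ℕ} {y : Fin (m + 1) → β}
    (hy : Monotone y) : Monotone fun t : ℝ => y (Fin.clamp ⌊t⌋₊ m) :=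
  hy.comp (Fin.clamp_monotone.comp Nat.floor_mono)

theorem Fin.clamp_floor_natCast {m : ℕ} (i : Fin (m + 1)) : Fin.clamp ⌊((i : ℕ) : ℝ)⌋₊ m = i := by
  rw [Nat.floor_natCast]
  exact Fin.ext (min_eq_left (Nat.lt_succ_iff.mp i.isLt))

theorem IsLatticePoly.exists_forall_monotone_apply_eq {n : ℕ} {p : (Fin n → ℝ) → ℝ}
    (hp : IsLatticePoly n p) : ∃ k : Fin n, ∀ y : Fin n → ℝ, Monotone y → p y = y k := by
  let v : Fin n → ℝ := fun i => (i : ℕ)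
  obtain ⟨k, hk⟩ := hp.exists_apply_eq v
  refine ⟨k, fun y hy => ?_⟩
  obtain ⟨m, rfl⟩ := Nat.exists_eq_add_one_of_ne_zero k.pos.ne'
  let f : ℝ → ℝ := fun t => y (Fin.clamp ⌊t⌋₊ m)
  have hfv : f ∘ v = y := funext fun i => congrArg y (Fin.clamp_floor_natCast i)
  calc p y = p (f ∘ v) := by rw [hfv]
    _ = f (v k) := by rw [hp.apply_comp_of_monotone hy.comp_clamp_floor, hk]
    _ = y k := congrFun hfv k

/-- Every symmetric lattice polynomial function is an order statistic. -/
theorem symmetric_latticePoly_is_orderStat (n : ℕ) (p : (Fin n → ℝ) → ℝ)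
    (hp : IsLatticePoly n p)
    (hsym : ∀ (σ : Equiv.Perm (Fin n)) (x : Fin n → ℝ), p (x ∘ σ) = p x) :
    ∃ k : Fin n, ∀ x : Fin n → ℝ, p x = orderStat x k := by
  obtain ⟨k, hk⟩ := hp.exists_forall_monotone_apply_eq
  refine ⟨k, fun x => ?_⟩
  rw [← hsym (Tuple.sort x) x]
  exact hk _ (Tuple.monotone_sort x)
end

section
/- Every order invariant function F : Eⁿ → E is discretizable: F(x) ∈ {x_1,…,x_n} ∪ B[E] for all x ∈ Eⁿ. In particular, if E is an open interval then every order invariant function is internal: min_i x_i ≤ F(x) ≤ max_i x_i. -/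
/-!
If `F x` lay in the interior of `E` and differed from every `x i`, there would be an open interval
around `F x`, inside `E`, containing no `x i`. Squashing that interval towards its left endpoint
gives an increasing bijection `φ` of `E` fixing every `x i` but not `F x`, and invariance would
force `φ (F x) = F (φ ∘ x) = F x`.
-/

open Set Function

theorem strictMono_of_strictMonoOn_Ioo_of_eqOn_compl {α : Type*} [LinearOrder α] {a b : α}
    {f : α → α} (hf : StrictMonoOn f (Ioo a b)) (hmaps : MapsTo f (Ioo a b) (Ioo a b))
    (hfix : EqOn f id (Ioo a b)ᶜ) : StrictMono f := by
  intro s t hst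
  by_cases hs : s ∈ Ioo a b <;> by_cases ht : t ∈ Ioo a b
  · exact hf hs ht hst
  · have hbt : b ≤ t := not_lt.mp fun h => ht ⟨hs.1.trans hst, h⟩
    calc f s < b := (hmaps hs).2
      _ ≤ t := hbt
      _ = f t := (hfix ht).symm
  · have hsa : s ≤ a := not_lt.mp fun h => hs ⟨h, hst.trans ht.2⟩
    calc f s = s := hfix hs
      _ ≤ a := hsa
      _ < f t := (hmaps ht).1
  · rwa [hfix hs, hfix ht]

theorem bijOn_of_bijOn_of_eqOn_compl {α : Type*} {f : α → α} {s I : Set α} (hIs : I ⊆ s)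
    (hf : BijOn f I I) (hfix : EqOn f id Iᶜ) (hinj : Injective f) : BijOn f s s := by
  have hout : BijOn f (s \ I) (s \ I) := (bijOn_id _).congr fun t ht => (hfix ht.2).symm
  simpa only [sdiff_union_of_subset hIs] using hout.union hf hinj.injOn

theorem exists_Ioo_subset_diff_of_mem_interior {E S : Set ℝ} (hS : S.Finite) {y : ℝ}
    (hy : y ∈ interior E) (hyS : y ∉ S) : ∃ a b, y ∈ Ioo a b ∧ Ioo a b ⊆ E \ S := by
  have hnhds : interior E \ S ∈ nhds y := (isOpen_interior.sdiff hS.isClosed).mem_nhds ⟨hy, hyS⟩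
  obtain ⟨a, b, hyab, hsub⟩ := mem_nhds_iff_exists_Ioo_subset.mp hnhds
  exact ⟨a, b, hyab, hsub.trans (sdiff_subset_sdiff_left interior_subset)⟩

/-- On `Ioo a b` this is the affine conjugate of `t ↦ t ^ 2` on `Ioo 0 1`. -/
noncomputable def squashIoo (a b t : ℝ) : ℝ :=
  if t ∈ Ioo a b then a + (t - a) ^ 2 / (b - a) else t

section squashIoo

variable {a b t : ℝ}

theorem squashIoo_of_mem (h : t ∈ Ioo a b) : squashIoo a b t = a + (t - a) ^ 2 / (b - a) :=
  if_pos h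

theorem eqOn_squashIoo_compl : EqOn (squashIoo a b) id (Ioo a b)ᶜ := fun _ h => if_neg h

theorem squashIoo_lt_self (h : t ∈ Ioo a b) : squashIoo a b t < t := by
  have hta : 0 < t - a := sub_pos.mpr h.1
  have hba : 0 < b - a := sub_pos.mpr (h.1.trans h.2)
  have hlt : (t - a) ^ 2 / (b - a) < t - a := by
    rw [div_lt_iff₀ hba]
    nlinarith [h.2]
  rw [squashIoo_of_mem h]
  linarith

theorem mapsTo_squashIoo : MapsTo (squashIoo a b) (Ioo a b) (Ioo a b) := by
  intro t h
  have hba : 0 < b - a := sub_pos.mpr (h.1.trans h.2)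
  have hpos : 0 < (t - a) ^ 2 / (b - a) := by
    have := sub_pos.mpr h.1
    positivity
  exact ⟨by rw [squashIoo_of_mem h]; linarith, (squashIoo_lt_self h).trans h.2⟩

theorem strictMonoOn_squashIoo : StrictMonoOn (squashIoo a b) (Ioo a b) := by
  intro s hs t ht hst
  have hba : 0 < b - a := sub_pos.mpr (hs.1.trans hs.2)
  have hsq : (s - a) ^ 2 < (t - a) ^ 2 := by nlinarith [hs.1]
  rw [squashIoo_of_mem hs, squashIoo_of_mem ht]
  linarith [div_lt_div_of_pos_right hsq hba]

theorem surjOn_squashIoo : SurjOn (squashIoo a b) (Ioo a b) (Ioo a b) := by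
  intro u hu
  have hba : 0 < b - a := sub_pos.mpr (hu.1.trans hu.2)
  have hprod : 0 < (u - a) * (b - a) := mul_pos (sub_pos.mpr hu.1) hba
  have hroot_pos : 0 < √((u - a) * (b - a)) := Real.sqrt_pos.mpr hprod
  have hroot_lt : √((u - a) * (b - a)) < b - a :=
    (Real.sqrt_lt' hba).mpr (by nlinarith [hu.2])
  have hmem : a + √((u - a) * (b - a)) ∈ Ioo a b := ⟨by linarith, by linarith⟩
  refine ⟨_, hmem, ?_⟩
  rw [squashIoo_of_mem hmem, add_sub_cancel_left, Real.sq_sqrt hprod.le, mul_div_cancel_right₀ _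
    hba.ne']
  ring

theorem strictMono_squashIoo : StrictMono (squashIoo a b) :=
  strictMono_of_strictMonoOn_Ioo_of_eqOn_compl strictMonoOn_squashIoo mapsTo_squashIoo
    eqOn_squashIoo_compl

theorem bijOn_squashIoo {E : Set ℝ} (hE : Ioo a b ⊆ E) : BijOn (squashIoo a b) E E :=
  bijOn_of_bijOn_of_eqOn_compl hE
    ⟨mapsTo_squashIoo, strictMonoOn_squashIoo.injOn, surjOn_squashIoo⟩
    eqOn_squashIoo_compl strictMono_squashIoo.injective

end squashIoo

theorem exists_strictMono_bijective_fixing_finite_moving {E S : Set ℝ} (hS : S.Finite) {y : E}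
    (hy : (y : ℝ) ∈ interior E) (hyS : (y : ℝ) ∉ S) :
    ∃ φ : E → E, StrictMono φ ∧ Bijective φ ∧ (∀ t : E, (t : ℝ) ∈ S → φ t = t) ∧ φ y ≠ y := by
  obtain ⟨a, b, hyab, hsub⟩ := exists_Ioo_subset_diff_of_mem_interior hS hy hyS
  have hbij := bijOn_squashIoo (hsub.trans sdiff_subset)
  refine ⟨hbij.mapsTo.restrict _ E E, fun s t hst => strictMono_squashIoo hst, hbij.bijective,
    fun t ht => Subtype.ext (eqOn_squashIoo_compl fun hab => (hsub hab).2 ht),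
    fun h => (squashIoo_lt_self hyab).ne (congrArg Subtype.val h)⟩

def IsOrderInvariant {ι : Type*} {E : Set ℝ} (F : (ι → E) → E) : Prop :=
  ∀ φ : E → E, StrictMono φ → Bijective φ → ∀ x : ι → E, F (fun i => φ (x i)) = φ (F x)

namespace IsOrderInvariant

variable {ι : Type*} [Finite ι] {E : Set ℝ} {F : (ι → E) → E}

theorem eq_apply_or_mem_diff_interior (hF : IsOrderInvariant F) (x : ι → E) :
    (∃ i, F x = x i) ∨ (F x : ℝ) ∈ E \ interior E := by
  by_cases hint : (F x : ℝ) ∈ interior E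
  swap
  · exact Or.inr ⟨(F x).2, hint⟩
  left
  by_contra! hne
  have hnot_mem : (F x : ℝ) ∉ range fun i => (x i : ℝ) :=
    fun ⟨i, hi⟩ => hne i (Subtype.ext hi.symm)
  obtain ⟨φ, hmono, hbij, hfix, hmove⟩ :=
    exists_strictMono_bijective_fixing_finite_moving (finite_range _) hint hnot_mem
  have hfix_x : (fun i => φ (x i)) = x := funext fun i => hfix _ ⟨i, rfl⟩
  exact hmove (by rw [← hF φ hmono hbij x, hfix_x])

theorem mem_Icc_sInf_sSup (hF : IsOrderInvariant F) (hE : IsOpen E) (x : ι → E) :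
    sInf (range fun i => (x i : ℝ)) ≤ (F x : ℝ) ∧ (F x : ℝ) ≤ sSup (range fun i => (x i : ℝ)) := by
  rcases hF.eq_apply_or_mem_diff_interior x with ⟨i, hi⟩ | ⟨hmem, hnot⟩
  · have hFx : (F x : ℝ) ∈ range fun i => (x i : ℝ) := ⟨i, by rw [hi]⟩
    exact ⟨csInf_le (finite_range _).bddBelow hFx, le_csSup (finite_range _).bddAbove hFx⟩
  · exact absurd (by rwa [hE.interior_eq]) hnot

end IsOrderInvariant

theorem orderInvariant_discretizable_and_internal_general (n : ℕ) (E : Set ℝ)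
    (F : (Fin n → E) → E)
    (hinv : ∀ φ : E → E, StrictMono φ → Function.Bijective φ →
      ∀ x : Fin n → E, F (fun i => φ (x i)) = φ (F x)) :
    (∀ x : Fin n → E, (∃ i, F x = x i) ∨ (F x : ℝ) ∈ E \ interior E) ∧
    (IsOpen E → ∀ x : Fin n → E,
      sInf (Set.range fun i => (x i : ℝ)) ≤ (F x : ℝ) ∧
      (F x : ℝ) ≤ sSup (Set.range fun i => (x i : ℝ))) :=
  ⟨IsOrderInvariant.eq_apply_or_mem_diff_interior hinv,
    IsOrderInvariant.mem_Icc_sInf_sSup hinv⟩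

/-- Every order invariant function `F : Eⁿ → E` on an interval `E ⊆ ℝ` is discretizable:
`F x ∈ {x₁,…,xₙ} ∪ B[E]` where `B[E] = E \ interior E`; in particular, if `E` is open
then `F` is internal. -/
theorem orderInvariant_discretizable_and_internal (n : ℕ) (E : Set ℝ)
    (hE : E.OrdConnected) (F : (Fin n → E) → E)
    (hinv : ∀ φ : E → E, StrictMono φ → Function.Bijective φ →
      ∀ x : Fin n → E, F (fun i => φ (x i)) = φ (F x)) :
    (∀ x : Fin n → E, (∃ i, F x = x i) ∨ (F x : ℝ) ∈ E \ interior E) ∧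
    (IsOpen E → ∀ x : Fin n → E,
      sInf (Set.range fun i => (x i : ℝ)) ≤ (F x : ℝ) ∧
      (F x : ℝ) ≤ sSup (Set.range fun i => (x i : ℝ))) :=
  orderInvariant_discretizable_and_internal_general n E F hinv
end

section
/- Let E be an open real interval. A function F : Eⁿ → E is a continuous order invariant function if and only if it is a lattice polynomial function (restricted to Eⁿ). -/
open Set Filter Real

namespace IsLatticePoly

variable {α : Type*} [LinearOrder α] {n : ℕ}

theorem finset_sup' {ι : Type*} {t : Finset ι} (ht : t.Nonempty) {f : ι → (Fin n → α) → α}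
    (hf : ∀ i ∈ t, IsLatticePoly n (f i)) :
    IsLatticePoly n (fun x => t.sup' ht fun i => f i x) := by
  induction ht using Finset.Nonempty.cons_induction with
  | singleton i => simpa using hf i (by simp)
  | cons i s hi hs ih =>
    simp only [Finset.sup'_cons hs]
    exact .sup (hf i (by simp)) (ih fun j hj => hf j (by simp [hj]))

theorem finset_inf' {ι : Type*} {t : Finset ι} (ht : t.Nonempty) {f : ι → (Fin n → α) → α}
    (hf : ∀ i ∈ t, IsLatticePoly n (f i)) :
    IsLatticePoly n (fun x => t.inf' ht fun i => f i x) := by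
  induction ht using Finset.Nonempty.cons_induction with
  | singleton i => simpa using hf i (by simp)
  | cons i s hi hs ih =>
    simp only [Finset.inf'_cons hs]
    exact .inf (hf i (by simp)) (ih fun j hj => hf j (by simp [hj]))

theorem map_monotone {F : (Fin n → α) → α} (hF : IsLatticePoly n F) {φ : α → α}
    (hφ : Monotone φ) (x : Fin n → α) : F (fun i => φ (x i)) = φ (F x) := by
  induction hF with
  | proj k => rfl
  | inf _ _ ihp ihq => simp only [ihp, ihq, hφ.map_min]
  | sup _ _ ihp ihq => simp only [ihp, ihq, hφ.map_max]

protected theorem continuous [TopologicalSpace α] [OrderClosedTopology α]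
    {F : (Fin n → α) → α} (hF : IsLatticePoly n F) : Continuous F := by
  induction hF with
  | proj k => exact continuous_apply k
  | inf _ _ hp hq => exact hp.min hq
  | sup _ _ hp hq => exact hp.max hq

theorem conj_orderIso {β : Type*} [LinearOrder β] (e : α ≃o β) {F : (Fin n → α) → α}
    (hF : IsLatticePoly n F) : IsLatticePoly n (fun y => e (F fun i => e.symm (y i))) := by
  induction hF with
  | proj k => simpa using proj k
  | inf _ _ hp hq => simpa only [e.monotone.map_min] using hp.inf hq
  | sup _ _ hp hq => simpa only [e.monotone.map_max] using hp.sup hq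

end IsLatticePoly

theorem Set.Finite.exists_Ico_forall_notMem_Ioo {α : Type*} [LinearOrder α] {s : Set α}
    (hs : s.Finite) {d b : α} (hdb : d < b) : ∃ a, d ≤ a ∧ a < b ∧ ∀ y ∈ s, y ∉ Ioo a b := by
  obtain ⟨a, ha, hmax⟩ := Set.exists_max_image (insert d (s ∩ Iio b)) id
    ((hs.inter_of_left _).insert d) (insert_nonempty _ _)
  refine ⟨a, hmax d (mem_insert _ _), ?_, fun y hy hya => ?_⟩
  · rcases ha with rfl | ha
    exacts [hdb, ha.2]
  · exact (hmax y (mem_insert_of_mem _ ⟨hy, hya.2⟩)).not_gt hya.1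


theorem Monotone.surjective_const_mul_add {ψ : ℝ → ℝ} (hψc : Continuous ψ) (hψm : Monotone ψ)
    {ε : ℝ} (hε : 0 < ε) : Function.Surjective fun s => ε * s + ψ s := by
  refine Continuous.surjective (by fun_prop) ?_ ?_
  · exact tendsto_atTop_add_left_of_le' _ (ψ 0) ((eventually_ge_atTop 0).mono fun s hs => hψm hs)
      (tendsto_id.const_mul_atTop hε) |>.congr fun s => add_comm _ _
  · exact tendsto_atBot_add_left_of_ge' _ (ψ 0) ((eventually_le_atBot 0).mono fun s hs => hψm hs)
      (tendsto_id.const_mul_atBot hε) |>.congr fun s => add_comm _ _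

section

variable {n : ℕ}

def CommutesWithContinuousMonotone (G : (Fin n → ℝ) → ℝ) : Prop :=
  ∀ ψ : ℝ → ℝ, Continuous ψ → Monotone ψ → ∀ x, G (fun i => ψ (x i)) = ψ (G x)

-- `ψ` is the limit as `ε → 0⁺` of the automorphisms `fun s => ε * s + ψ s`.
theorem commutesWithContinuousMonotone_of_orderIso {G : (Fin n → ℝ) → ℝ} (hc : Continuous G)
    (hinv : ∀ φ : ℝ ≃o ℝ, ∀ x, G (fun i => φ (x i)) = φ (G x)) :
    CommutesWithContinuousMonotone G := by
  intro ψ hψc hψm x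
  have hpos : EqOn (fun ε => G fun i => ε * x i + ψ (x i)) (fun ε => ε * G x + ψ (G x)) (Ioi 0) :=
    fun ε hε => hinv (StrictMono.orderIsoOfSurjective _
      ((strictMono_id.const_mul hε).add_monotone hψm) (hψm.surjective_const_mul_add hψc hε)) x
  have hzero := hpos.closure (by fun_prop) (by fun_prop) (by simp : (0 : ℝ) ∈ closure (Ioi 0))
  simpa using hzero

noncomputable def charVec (S : Finset (Fin n)) : Fin n → ℝ := fun i => if i ∈ S then 1 else 0

theorem charVec_empty : charVec (∅ : Finset (Fin n)) = fun _ => 0 := by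
  funext i
  simp [charVec]

theorem charVec_univ : charVec (Finset.univ : Finset (Fin n)) = fun _ => 1 := by
  funext i
  simp [charVec]

namespace CommutesWithContinuousMonotone

variable {G : (Fin n → ℝ) → ℝ}

theorem apply_const (hG : CommutesWithContinuousMonotone G) (c : ℝ) : G (fun _ => c) = c :=
  hG _ continuous_const monotone_const fun _ => c

theorem apply_ite (hG : CommutesWithContinuousMonotone G) {a b : ℝ} (hab : a ≤ b)
    (S : Finset (Fin n)) :
    G (fun i => if i ∈ S then b else a) = a + (b - a) * G (charVec S) := by
  rw [← hG (fun s => a + (b - a) * s) (by fun_prop)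
    ((monotone_id.const_mul (sub_nonneg.2 hab)).const_add a)]
  congr 1
  funext i
  by_cases hi : i ∈ S <;> simp [charVec, hi]

theorem nonempty_of_apply_charVec (hG : CommutesWithContinuousMonotone G) {S : Finset (Fin n)}
    (hS : G (charVec S) = 1) : S.Nonempty := by
  rw [Finset.nonempty_iff_ne_empty]
  rintro rfl
  rw [charVec_empty, hG.apply_const] at hS
  exact zero_ne_one hS

theorem apply_charVec_of_subset (hG : CommutesWithContinuousMonotone G) {S T : Finset (Fin n)}
    (hST : S ⊆ T) (hS : G (charVec S) = 1) : G (charVec T) = 1 := by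
  classical
  set y : Fin n → ℝ := fun i => if i ∈ S then 1 else if i ∈ T then 1 / 2 else 0
  have hyS : charVec S = fun i => max (2 * y i - 1) 0 := by
    funext i
    by_cases hiS : i ∈ S <;> by_cases hiT : i ∈ T <;> norm_num [charVec, y, hiS, hiT]
  have hyT : charVec T = fun i => min (2 * y i) 1 := by
    funext i
    by_cases hiS : i ∈ S
    · norm_num [charVec, y, hiS, hST hiS]
    · by_cases hiT : i ∈ T <;> norm_num [charVec, y, hiS, hiT]
  have hGy : G y = 1 := by
    have h := hG (fun s => max (2 * s - 1) 0) (by fun_prop)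
      (fun s t hst => max_le_max_right 0 (by linarith)) y
    rw [← hyS, hS] at h
    rcases max_choice (2 * G y - 1) 0 with h' | h' <;> rw [h'] at h <;> linarith
  rw [hyT, hG (fun s => min (2 * s) 1) (by fun_prop)
    (fun s t hst => min_le_min_right 1 (by linarith)) y, hGy]
  norm_num

-- Clamping to `[a, b]` turns `x` into a vector with values `a` and `b` only.
theorem clamp_apply (hG : CommutesWithContinuousMonotone G) {a b : ℝ} (hab : a < b)
    {x : Fin n → ℝ} (hx : ∀ i, x i ∉ Ioo a b) :
    max a (min (G x) b) = a + (b - a) * G (charVec (Finset.univ.filter fun i => b ≤ x i)) := by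
  rw [← hG.apply_ite hab.le, ← hG (fun s => max a (min s b)) (by fun_prop)
    (monotone_const.max (monotone_id.min monotone_const))]
  congr 1
  funext i
  by_cases hi : b ≤ x i
  · simp [hi, hab.le]
  · have : x i ≤ a := by
      by_contra h
      exact hx i ⟨not_le.1 h, not_le.1 hi⟩
    simp [hi, this, (not_le.1 hi).le]

theorem apply_charVec_le (hG : CommutesWithContinuousMonotone G) (x : Fin n → ℝ) :
    G (charVec (Finset.univ.filter fun i => G x ≤ x i)) = 1 := by
  obtain ⟨a, -, hab, hgap⟩ := (Set.finite_range x).exists_Ico_forall_notMem_Ioo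
    (sub_one_lt (G x))
  have h := hG.clamp_apply hab fun i => hgap _ (mem_range_self i)
  rw [min_self, max_eq_right hab.le] at h
  refine mul_left_cancel₀ (sub_ne_zero.2 hab.ne') ?_
  linarith

theorem inf'_le_apply (hG : CommutesWithContinuousMonotone G) {S : Finset (Fin n)}
    (hS : G (charVec S) = 1) (x : Fin n → ℝ) :
    S.inf' (hG.nonempty_of_apply_charVec hS) x ≤ G x := by
  set c := S.inf' (hG.nonempty_of_apply_charVec hS) x
  by_contra! hlt
  obtain ⟨a, hxa, hac, hgap⟩ := (Set.finite_range x).exists_Ico_forall_notMem_Ioo hlt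
  have hT := hG.apply_charVec_of_subset (T := Finset.univ.filter fun i => c ≤ x i)
    (fun i hi => Finset.mem_filter.2 ⟨Finset.mem_univ i, Finset.inf'_le x hi⟩) hS
  have h := hG.clamp_apply hac fun i => hgap _ (mem_range_self i)
  rw [hT, min_eq_left hlt.le, max_eq_left hxa] at h
  linarith

theorem isLatticePoly (hG : CommutesWithContinuousMonotone G) : IsLatticePoly n G := by
  classical
  let 𝒮 := {S : Finset (Fin n) // G (charVec S) = 1}
  have hne : (Finset.univ : Finset 𝒮).Nonempty :=
    ⟨⟨Finset.univ, by rw [charVec_univ, hG.apply_const]⟩, Finset.mem_univ _⟩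
  have hrepr : G = fun x => Finset.univ.sup' hne fun S : 𝒮 =>
      S.1.inf' (hG.nonempty_of_apply_charVec S.2) fun i => x i := by
    funext x
    refine le_antisymm (Finset.le_sup'_of_le _ (Finset.mem_univ
      ⟨Finset.univ.filter fun i => G x ≤ x i, hG.apply_charVec_le x⟩) ?_)
      (Finset.sup'_le _ _ fun S _ => hG.inf'_le_apply S.2 x)
    exact Finset.le_inf' _ _ fun i hi => (Finset.mem_filter.1 hi).2
  rw [hrepr]
  exact .finset_sup' hne fun S _ => .finset_inf' _ fun i _ => .proj i

end CommutesWithContinuousMonotone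

end

noncomputable def orderIsoIoiReal (a : ℝ) : Ioi a ≃o ℝ :=
  StrictMono.orderIsoOfRightInverse (fun x => log (x - a))
    (fun x y (hxy : x.1 < y.1) => log_lt_log (sub_pos.2 x.2) (sub_lt_sub_right hxy a))
    (fun y => ⟨a + exp y, lt_add_of_pos_right a (exp_pos y)⟩) (fun y => by simp)

noncomputable def orderIsoIioReal (b : ℝ) : Iio b ≃o ℝ :=
  StrictMono.orderIsoOfRightInverse (fun x => -log (b - x))
    (fun x y (hxy : x.1 < y.1) => neg_lt_neg (log_lt_log (sub_pos.2 y.2) (sub_lt_sub_left hxy b)))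
    (fun y => ⟨b - exp (-y), sub_lt_self b (exp_pos _)⟩) (fun y => by simp)

noncomputable def orderIsoIooReal {a b : ℝ} (hab : a < b) : Ioo a b ≃o ℝ :=
  StrictMono.orderIsoOfRightInverse (fun x => log (x - a) - log (b - x))
    (fun x y (hxy : x.1 < y.1) => sub_lt_sub (log_lt_log (sub_pos.2 x.2.1) (sub_lt_sub_right hxy a))
      (log_lt_log (sub_pos.2 y.2.2) (sub_lt_sub_left hxy b)))
    (fun y => ⟨(a + b * exp y) / (1 + exp y), by
      constructor
      · rw [lt_div_iff₀ (by positivity)]; nlinarith [exp_pos y]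
      · rw [div_lt_iff₀ (by positivity)]; nlinarith [exp_pos y]⟩)
    (fun y => by
      have h1 : (a + b * exp y) / (1 + exp y) - a = (b - a) * exp y / (1 + exp y) := by
        field_simp; ring
      have h2 : b - (a + b * exp y) / (1 + exp y) = (b - a) / (1 + exp y) := by
        field_simp; ring
      have hba : b - a ≠ 0 := (sub_pos.2 hab).ne'
      simp only [h1, h2]
      rw [← log_div (by positivity) (by positivity)]
      field_simp
      simp)

theorem IsOpen.eq_Ioo_or_Ioi_or_Iio_or_univ {E : Set ℝ} (hopen : IsOpen E) (hE : E.OrdConnected) :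
    (∃ a b, E = Ioo a b) ∨ (∃ a, E = Ioi a) ∨ (∃ b, E = Iio b) ∨ E = univ := by
  rw [← hopen.interior_eq]
  rcases hE.isPreconnected.mem_intervals with h | h | h | h | h | h | h | h | h | h <;>
    rw [h] <;> try simp
  exact Or.inl ⟨0, 0, (Ioo_self 0).symm⟩

theorem nonempty_orderIso_real {E : Set ℝ} (hne : E.Nonempty) (hopen : IsOpen E)
    (hE : E.OrdConnected) : Nonempty (E ≃o ℝ) := by
  obtain ⟨a, b, rfl⟩ | ⟨a, rfl⟩ | ⟨b, rfl⟩ | rfl := hopen.eq_Ioo_or_Ioi_or_Iio_or_univ hE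
  · exact ⟨orderIsoIooReal (nonempty_Ioo.1 hne)⟩
  · exact ⟨orderIsoIoiReal a⟩
  · exact ⟨orderIsoIioReal b⟩
  · exact ⟨OrderIso.Set.univ⟩

/-- On an open real interval `E`, the continuous order invariant functions
`F : Eⁿ → E` are exactly the lattice polynomial functions. -/
theorem continuous_orderInvariant_iff_latticePoly (n : ℕ) (E : Set ℝ)
    (hne : E.Nonempty) (hopen : IsOpen E) (hE : E.OrdConnected)
    (F : (Fin n → E) → E) :
    (Continuous F ∧
      ∀ φ : E → E, StrictMono φ → Function.Bijective φ →
        ∀ x : Fin n → E, F (fun i => φ (x i)) = φ (F x)) ↔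
    IsLatticePoly n F := by
  refine ⟨fun ⟨hFc, hFinv⟩ => ?_,
    fun hF => ⟨hF.continuous, fun φ hφ _ => hF.map_monotone hφ.monotone⟩⟩
  obtain ⟨e⟩ := nonempty_orderIso_real hne hopen hE
  have hG : CommutesWithContinuousMonotone fun y => e (F fun i => e.symm (y i)) := by
    refine commutesWithContinuousMonotone_of_orderIso (by fun_prop) fun ψ y => ?_
    have h := hFinv (e.trans (ψ.trans e.symm)) (OrderIso.strictMono _) (OrderIso.bijective _)
      fun i => e.symm (y i)
    simpa using congrArg e h
  simpa using hG.isLatticePoly.conj_orderIso e.symm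
end

section
/- Let E be an open real interval and let F : Eⁿ → E be an order invariant function. Then for every x ∈ Eⁿ, F(x) ∈ {x_1,…,x_n}; moreover, on each minimal order invariant subset I of Eⁿ (i.e., each orbit of Eⁿ under the diagonal action of the group of increasing bijections of E), F coincides with a projection: there exists k_I ∈ [n] with F(x) = x_{k_I} for all x ∈ I. -/
/-!
If `F x` were none of the coordinates `xᵢ`, some small interval around `F x` inside `E` would
avoid them all. An increasing bijection of `E` that moves points only inside that interval,
but does move `F x`, fixes `x` and not `F x`, contradicting order invariance. Hence `F x = xₖ`
for some `k`, and invariance transports the same `k` along the whole orbit of `x`.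
-/

open Set Metric Filter

noncomputable def tentBump (t δ s : ℝ) : ℝ := s + max 0 (δ - |s - t|) / 2

namespace tentBump

variable {t δ s : ℝ}

-- The tent is 1-Lipschitz, so half of it cannot undo the increase of the identity.
theorem strictMono (t δ : ℝ) : StrictMono (tentBump t δ) := by
  intro a b hab
  have hLip : |max (δ - |b - t|) 0 - max (δ - |a - t|) 0| ≤ b - a :=
    calc |max (δ - |b - t|) 0 - max (δ - |a - t|) 0|
        ≤ |(δ - |b - t|) - (δ - |a - t|)| := abs_max_sub_max_le_abs _ _ _
      _ = |(|a - t| - |b - t|)| := by ring_nf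
      _ ≤ |(a - t) - (b - t)| := abs_abs_sub_abs_le_abs_sub _ _
      _ = b - a := by rw [sub_sub_sub_cancel_right, abs_sub_comm, abs_of_pos (by linarith)]
  rw [max_comm _ (0 : ℝ), max_comm _ (0 : ℝ)] at hLip
  unfold tentBump
  linarith [(abs_le.1 hLip).1]

theorem surjective (t δ : ℝ) : Function.Surjective (tentBump t δ) := by
  have hcont : Continuous (tentBump t δ) := by unfold tentBump; fun_prop
  refine hcont.surjective (tendsto_atTop_mono (fun s => ?_) tendsto_id)
    (tendsto_atBot_mono (fun s => ?_) (tendsto_atBot_add_const_right _ (max 0 δ / 2) tendsto_id))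
  · unfold tentBump; simp only [id]; linarith [le_max_left 0 (δ - |s - t|)]
  · unfold tentBump; simp only [id]
    linarith [max_le_max_left 0 (by linarith [abs_nonneg (s - t)] : δ - |s - t| ≤ δ)]

theorem eq_self_of_notMem_ball (hs : s ∉ ball t δ) : tentBump t δ s = s := by
  rw [mem_ball, Real.dist_eq, not_lt] at hs
  unfold tentBump
  rw [max_eq_left (by linarith)]
  ring

theorem mapsTo_ball : MapsTo (tentBump t δ) (ball t δ) (ball t δ) := by
  intro s hs
  rw [mem_ball, Real.dist_eq] at hs ⊢
  unfold tentBump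
  rw [max_eq_right (by linarith)]
  rcases abs_cases (s - t) with ⟨h, _⟩ | ⟨h, _⟩ <;> rw [h] at hs ⊢ <;>
    rw [abs_lt] <;> constructor <;> linarith

theorem apply_center (hδ : 0 < δ) : tentBump t δ t ≠ t := by
  unfold tentBump
  rw [sub_self, abs_zero, sub_zero, max_eq_right hδ.le]
  linarith

theorem mem_iff_of_ball_subset {E : Set ℝ} (hE : ball t δ ⊆ E) (s : ℝ) :
    tentBump t δ s ∈ E ↔ s ∈ E := by
  by_cases hs : s ∈ ball t δ
  · exact iff_of_true (hE (mapsTo_ball hs)) (hE hs)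
  · rw [eq_self_of_notMem_ball hs]

end tentBump

theorem StrictMono.strictMono_bijective_subtypeMap {α : Type*} [LinearOrder α] {E : Set α}
    {f : α → α} (hf : StrictMono f) (hsurj : Function.Surjective f) (hE : ∀ s, f s ∈ E ↔ s ∈ E) :
    StrictMono (Subtype.map f fun s => (hE s).2 : E → E) ∧
      Function.Bijective (Subtype.map f fun s => (hE s).2 : E → E) := by
  have hmono : StrictMono (Subtype.map f fun s => (hE s).2 : E → E) := fun _ _ h => hf h
  refine ⟨hmono, hmono.injective, fun e => ?_⟩
  obtain ⟨s, hs⟩ := hsurj e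
  exact ⟨⟨s, (hE s).1 (hs ▸ e.2)⟩, Subtype.ext hs⟩

theorem exists_strictMono_bijective_fix_of_notMem {E : Set ℝ} (hE : IsOpen E) {S : Set ℝ}
    (hS : S.Finite) {t : E} (ht : (t : ℝ) ∉ S) :
    ∃ φ : E → E, StrictMono φ ∧ Function.Bijective φ ∧
      (∀ e : E, (e : ℝ) ∈ S → φ e = e) ∧ φ t ≠ t := by
  obtain ⟨δ, hδ, hball⟩ := isOpen_iff.1 (hE.sdiff hS.isClosed) t ⟨t.2, ht⟩
  have hmem := tentBump.mem_iff_of_ball_subset (hball.trans sdiff_subset)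
  obtain ⟨hmono, hbij⟩ :=
    (tentBump.strictMono t δ).strictMono_bijective_subtypeMap (tentBump.surjective t δ) hmem
  refine ⟨_, hmono, hbij, fun e he => Subtype.ext ?_, fun h => ?_⟩
  · exact tentBump.eq_self_of_notMem_ball fun hb => (hball hb).2 he
  · exact tentBump.apply_center hδ (congrArg Subtype.val h)

theorem exists_eq_apply_of_orderInvariant {ι : Type*} [Finite ι] {E : Set ℝ} (hE : IsOpen E)
    (F : (ι → E) → E)
    (hinv : ∀ φ : E → E, StrictMono φ → Function.Bijective φ →
      ∀ x : ι → E, F (fun i => φ (x i)) = φ (F x))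
    (x : ι → E) : ∃ i, F x = x i := by
  by_contra! hne
  have hF : (F x : ℝ) ∉ range fun i => (x i : ℝ) := by
    rintro ⟨i, hi⟩
    exact hne i (Subtype.ext hi).symm
  obtain ⟨φ, hmono, hbij, hfix, hmove⟩ :=
    exists_strictMono_bijective_fix_of_notMem hE (finite_range _) hF
  have hx : (fun i => φ (x i)) = x := funext fun i => hfix _ (mem_range_self i)
  exact hmove (by rw [← hinv φ hmono hbij, hx])

theorem orderInvariant_projection_on_orbits_general (n : ℕ) (E : Set ℝ)
    (hopen : IsOpen E)
    (F : (Fin n → E) → E)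
    (hinv : ∀ φ : E → E, StrictMono φ → Function.Bijective φ →
      ∀ x : Fin n → E, F (fun i => φ (x i)) = φ (F x)) :
    (∀ x : Fin n → E, ∃ i, F x = x i) ∧
    (∀ x : Fin n → E, ∃ k : Fin n, ∀ y : Fin n → E,
      (∃ φ : E → E, StrictMono φ ∧ Function.Bijective φ ∧ y = fun i => φ (x i)) →
      F y = y k) := by
  have hproj := exists_eq_apply_of_orderInvariant hopen F hinv
  refine ⟨hproj, fun x => ?_⟩
  obtain ⟨k, hk⟩ := hproj x
  refine ⟨k, ?_⟩
  rintro _ ⟨φ, hmono, hbij, rfl⟩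
  rw [hinv φ hmono hbij, hk]

/-- On an open real interval `E`, every order invariant function `F : Eⁿ → E` is
internal to its arguments, and on each orbit of `Eⁿ` under the diagonal action of the
group of increasing bijections of `E` it coincides with a projection. -/
theorem orderInvariant_projection_on_orbits (n : ℕ) (E : Set ℝ)
    (hne : E.Nonempty) (hopen : IsOpen E) (hE : E.OrdConnected)
    (F : (Fin n → E) → E)
    (hinv : ∀ φ : E → E, StrictMono φ → Function.Bijective φ →
      ∀ x : Fin n → E, F (fun i => φ (x i)) = φ (F x)) :
    (∀ x : Fin n → E, ∃ i, F x = x i) ∧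
    (∀ x : Fin n → E, ∃ k : Fin n, ∀ y : Fin n → E,
      (∃ φ : E → E, StrictMono φ ∧ Function.Bijective φ ∧ y = fun i => φ (x i)) →
      F y = y k) :=
  orderInvariant_projection_on_orbits_general n E hopen F hinv
end

section
/- Let E be an open real interval and F : Eⁿ → ℝ. If F is idempotent (F(x,…,x) = x for all x ∈ E) and comparison meaningful on a single ordinal scale, and ran(F) ⊆ E, then F is order invariant: F(φ(x₁),…,φ(xₙ)) = φ(F(x)) for all x ∈ Eⁿ and all increasing bijections φ of E. Conversely, every order invariant function F : Eⁿ → E is comparison meaningful on a single ordinal scale. -/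
/-! Idempotence gives `F x = F (e, …, e)` for `e = F x`. A transformation `φ` under which `F` is
comparison meaningful preserves both inequalities between these values, hence the equality, and
idempotence evaluates the right-hand side at `(φ e, …, φ e)` to `φ e`. The converse holds because
a strictly monotone `φ` reflects and preserves `≤`. -/

theorem map_eq_map_of_le_iff_le {ι α β : Type*} [PartialOrder β] {F : (ι → α) → β} {φ : α → α}
    (hF : ∀ x x', F x ≤ F x' ↔ F (fun i => φ (x i)) ≤ F (fun i => φ (x' i)))
    {x x' : ι → α} (h : F x = F x') : F (fun i => φ (x i)) = F (fun i => φ (x' i)) :=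
  le_antisymm ((hF x x').1 h.le) ((hF x' x).1 h.ge)

theorem le_iff_le_map_of_map_eq {ι α : Type*} [LinearOrder α] {G : (ι → α) → α} {φ : α → α}
    (hφ : StrictMono φ) (hG : ∀ x, G (fun i => φ (x i)) = φ (G x)) (x x' : ι → α) :
    G x ≤ G x' ↔ G (fun i => φ (x i)) ≤ G (fun i => φ (x' i)) := by
  rw [hG, hG, hφ.le_iff_le]

theorem idempotent_comparisonMeaningful_iff_orderInvariant_general (n : ℕ) (E : Set ℝ) :
    (∀ F : (Fin n → E) → ℝ,
      (∀ e : E, F (fun _ => e) = (e : ℝ)) →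
      (∀ φ : E → E, StrictMono φ → Function.Bijective φ →
        ∀ x x' : Fin n → E,
          (F x ≤ F x' ↔ F (fun i => φ (x i)) ≤ F (fun i => φ (x' i)))) →
      ∀ hran : ∀ x : Fin n → E, F x ∈ E,
        ∀ φ : E → E, StrictMono φ → Function.Bijective φ →
          ∀ x : Fin n → E, F (fun i => φ (x i)) = (φ ⟨F x, hran x⟩ : ℝ)) ∧
    (∀ G : (Fin n → E) → E,
      (∀ φ : E → E, StrictMono φ → Function.Bijective φ →
        ∀ x : Fin n → E, G (fun i => φ (x i)) = φ (G x)) →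
      ∀ φ : E → E, StrictMono φ → Function.Bijective φ →
        ∀ x x' : Fin n → E,
          ((G x : ℝ) ≤ (G x' : ℝ) ↔
            (G (fun i => φ (x i)) : ℝ) ≤ (G (fun i => φ (x' i)) : ℝ))) := by
  constructor
  · intro F hid hcm hran φ hφ hbij x
    have hconst := map_eq_map_of_le_iff_le (hcm φ hφ hbij) (hid ⟨F x, hran x⟩).symm
    rwa [hid] at hconst
  · intro G hG φ hφ hbij x x'
    exact le_iff_le_map_of_map_eq hφ (hG φ hφ hbij) x x'

/-- On an open real interval `E`: an idempotent function `F : Eⁿ → ℝ` that is comparison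
meaningful on a single ordinal scale and whose range lies in `E` is order invariant;
conversely, every order invariant function `G : Eⁿ → E` is comparison meaningful on a
single ordinal scale. -/
theorem idempotent_comparisonMeaningful_iff_orderInvariant (n : ℕ) (E : Set ℝ)
    (hne : E.Nonempty) (hopen : IsOpen E) (hE : E.OrdConnected) :
    (∀ F : (Fin n → E) → ℝ,
      (∀ e : E, F (fun _ => e) = (e : ℝ)) →
      (∀ φ : E → E, StrictMono φ → Function.Bijective φ →
        ∀ x x' : Fin n → E,
          (F x ≤ F x' ↔ F (fun i => φ (x i)) ≤ F (fun i => φ (x' i)))) →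
      ∀ hran : ∀ x : Fin n → E, F x ∈ E,
        ∀ φ : E → E, StrictMono φ → Function.Bijective φ →
          ∀ x : Fin n → E, F (fun i => φ (x i)) = (φ ⟨F x, hran x⟩ : ℝ)) ∧
    (∀ G : (Fin n → E) → E,
      (∀ φ : E → E, StrictMono φ → Function.Bijective φ →
        ∀ x : Fin n → E, G (fun i => φ (x i)) = φ (G x)) →
      ∀ φ : E → E, StrictMono φ → Function.Bijective φ →
        ∀ x x' : Fin n → E,
          ((G x : ℝ) ≤ (G x' : ℝ) ↔
            (G (fun i => φ (x i)) : ℝ) ≤ (G (fun i => φ (x' i)) : ℝ))) :=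
  idempotent_comparisonMeaningful_iff_orderInvariant_general n E
end

section
/- Let E be an open real interval, n ≥ 2, and F : Eⁿ → ℝ a function that is symmetric and comparison meaningful on independent ordinal scales. Then F is constant. In particular, no symmetric idempotent function on Eⁿ (n ≥ 2) is comparison meaningful on independent ordinal scales. -/
/-!
An open interval `E` is order isomorphic to `ℝ`, so any pair `u < v` in `E` can be moved to any
other pair `u' < v'` by an increasing bijection of `E` (conjugate of an affine map of `ℝ`).
Take `a` strictly increasing and `σ` a cyclic shift of the coordinates: symmetry gives
`F a = F (a ∘ σ)`, and `a i < a (σ i)` holds exactly at `i = 0`. Moving each coordinate pair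
`(a i, a (σ i))` to `(x i, y i)`, comparison meaningfulness turns this into `F x = F y` whenever
`x 0 < y 0` and `y i < x i` for `i ≠ 0`. Any two points are related in this way to a common point
with a very large first and very small other coordinates, so `F` is constant.
-/

open Set

theorem nonempty_orderIso_real_of_isOpen_of_ordConnected {E : Set ℝ} (hne : E.Nonempty)
    (hopen : IsOpen E) (hE : E.OrdConnected) : Nonempty (ℝ ≃o E) := by
  have of_range (f : ℝ → ℝ) (hf : StrictMono f) (hr : range f = E) : Nonempty (ℝ ≃o E) :=
    ⟨(hf.orderIso f).trans (OrderIso.setCongr _ _ hr)⟩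
  have no_least {a : ℝ} (ha : a ∈ E) (h : E ⊆ Ici a) : False := by
    have := interior_mono h (hopen.interior_eq.symm ▸ ha)
    rw [interior_Ici] at this
    exact lt_irrefl a this
  have no_greatest {b : ℝ} (hb : b ∈ E) (h : E ⊆ Iic b) : False := by
    have := interior_mono h (hopen.interior_eq.symm ▸ hb)
    rw [interior_Iic] at this
    exact lt_irrefl b this
  rcases hE.isPreconnected.mem_intervals with h | h | h | h | h | h | h | h | h | h <;>
    generalize sInf E = a at h <;> generalize sSup E = b at h <;> subst h
  · exact (no_least (left_mem_Icc.2 (nonempty_Icc.1 hne)) Icc_subset_Ici_self).elim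
  · exact (no_least (left_mem_Ico.2 (nonempty_Ico.1 hne)) Ico_subset_Ici_self).elim
  · exact (no_greatest (right_mem_Ioc.2 (nonempty_Ioc.1 hne)) Ioc_subset_Iic_self).elim
  · have hab : 0 < (b - a) / 2 := by linarith [nonempty_Ioo.1 hne]
    refine of_range (((b - a) / 2 * · + (a + b) / 2) ∘ Subtype.val ∘ orderIsoIooNegOneOne ℝ)
      (((strictMono_mul_left_of_pos hab).add_const _).comp
        ((Subtype.strictMono_coe _).comp (orderIsoIooNegOneOne ℝ).strictMono)) ?_
    rw [range_comp, (orderIsoIooNegOneOne ℝ).surjective.range_comp, Subtype.range_coe,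
      image_affine_Ioo hab]
    congr 1 <;> ring
  · exact (no_least self_mem_Ici subset_rfl).elim
  · refine of_range ((a + ·) ∘ Real.exp) (fun x y hxy => by simpa using hxy) ?_
    rw [range_comp, Real.range_exp, image_const_add_Ioi, add_zero]
  · exact (no_greatest self_mem_Iic subset_rfl).elim
  · refine of_range ((b - ·) ∘ Real.exp ∘ Neg.neg) (fun x y hxy => by simpa using hxy) ?_
    rw [range_comp, neg_surjective.range_comp, Real.range_exp, image_const_sub_Ioi, sub_zero]
  · exact of_range id strictMono_id range_id
  · exact absurd hne not_nonempty_empty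

theorem exists_orderIso_apply_eq_apply_eq {α : Type*} [Field α] [LinearOrder α]
    [IsStrictOrderedRing α] {u v u' v' : α} (h : u < v) (h' : u' < v') :
    ∃ φ : α ≃o α, φ u = u' ∧ φ v = v' := by
  have hc : 0 < (v' - u') / (v - u) := div_pos (sub_pos.2 h') (sub_pos.2 h)
  refine ⟨(OrderIso.addRight (-u)).trans
    ((OrderIso.mulLeft₀ _ hc).trans (OrderIso.addRight u')), ?_, ?_⟩
  · simp
  · simp [← sub_eq_add_neg, div_mul_cancel₀ _ (sub_pos.2 h).ne']

/-- `α ≃o α` plays the role of `Φ[α]`, one independent scale change per coordinate. -/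
def ComparisonMeaningful {ι α β : Type*} [LE α] [LE β] (F : (ι → α) → β) : Prop :=
  ∀ (φ : ι → α ≃o α) (x y : ι → α),
    F x ≤ F y ↔ F (fun i => φ i (x i)) ≤ F (fun i => φ i (y i))

namespace ComparisonMeaningful

section General

variable {ι α β : Type*} [LE α] {F : (ι → α) → β}

theorem comp_orderIso {γ : Type*} [LE β] [LE γ] (hF : ComparisonMeaningful F) (e : γ ≃o α) :
    ComparisonMeaningful fun x => F fun i => e (x i) := fun φ x y => by
  simpa using hF (fun i => e.symm.trans ((φ i).trans e)) (fun i => e (x i)) fun i => e (y i)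

theorem map_eq_map_of_eq [PartialOrder β] (hF : ComparisonMeaningful F) (φ : ι → α ≃o α)
    {x y : ι → α} (h : F x = F y) : F (fun i => φ i (x i)) = F (fun i => φ i (y i)) :=
  le_antisymm ((hF φ x y).1 h.le) ((hF φ y x).1 h.ge)

end General

section Field

variable {α β : Type*} [Field α] [LinearOrder α] [IsStrictOrderedRing α] [PartialOrder β]
  {n : ℕ} {F : (Fin (n + 2) → α) → β}

theorem eq_of_lt_of_forall_ne_gt (hF : ComparisonMeaningful F)
    (hsym : ∀ (σ : Equiv.Perm (Fin (n + 2))) x, F (x ∘ σ) = F x) {x y : Fin (n + 2) → α}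
    (h₀ : x 0 < y 0) (h : ∀ i ≠ 0, y i < x i) : F x = F y := by
  set σ := (finRotate (n + 2)).symm
  set a : Fin (n + 2) → α := fun i => (i : ℕ)
  have ha : StrictMono a := fun i j hij => Nat.cast_lt.2 hij
  have hφ (i : Fin (n + 2)) : ∃ φ : α ≃o α, φ (a i) = x i ∧ φ (a (σ i)) = y i := by
    rcases eq_or_ne i 0 with rfl | hi
    · refine exists_orderIso_apply_eq_apply_eq (ha ?_) h₀
      simp [σ, Fin.pos_iff_ne_zero]
    · obtain ⟨φ, hφσ, hφa⟩ := exists_orderIso_apply_eq_apply_eq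
        (ha ((finRotate_symm_lt_iff_ne_zero i).2 hi)) (h i hi)
      exact ⟨φ, hφa, hφσ⟩
  choose φ hφa hφσ using hφ
  simpa [hφa, hφσ] using hF.map_eq_map_of_eq φ (hsym σ a).symm

theorem eq_of_symmetric (hF : ComparisonMeaningful F)
    (hsym : ∀ (σ : Equiv.Perm (Fin (n + 2))) x, F (x ∘ σ) = F x) (x y : Fin (n + 2) → α) :
    F x = F y := by
  obtain ⟨c, hc⟩ := Finite.exists_le fun i => max |x i| |y i|
  set z : Fin (n + 2) → α := fun i => if i = 0 then c + 1 else -(c + 1)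
  have hz (w : Fin (n + 2) → α) (hw : ∀ i, |w i| ≤ c) : F w = F z := by
    refine hF.eq_of_lt_of_forall_ne_gt hsym ?_ fun i hi => ?_
    · simp only [z, if_pos]
      linarith [(abs_le.1 (hw 0)).2]
    · simp only [z, if_neg hi]
      linarith [(abs_le.1 (hw i)).1]
  rw [hz x fun i => (le_max_left _ _).trans (hc i), hz y fun i => (le_max_right _ _).trans (hc i)]

end Field

end ComparisonMeaningful

/-- On an open real interval `E` with `n ≥ 2`, every symmetric function `F : Eⁿ → ℝ`
that is comparison meaningful on independent ordinal scales is constant; in particular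
it cannot be idempotent. -/
theorem symmetric_comparisonMeaningful_indep_constant (n : ℕ) (hn : 2 ≤ n) (E : Set ℝ)
    (hne : E.Nonempty) (hopen : IsOpen E) (hE : E.OrdConnected)
    (F : (Fin n → E) → ℝ)
    (hsym : ∀ (σ : Equiv.Perm (Fin n)) (x : Fin n → E), F (x ∘ σ) = F x)
    (hcm : ∀ φ : Fin n → E → E,
      (∀ i, StrictMono (φ i) ∧ Function.Bijective (φ i)) →
      ∀ x x' : Fin n → E,
        (F x ≤ F x' ↔ F (fun i => φ i (x i)) ≤ F (fun i => φ i (x' i)))) :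
    (∃ c : ℝ, ∀ x : Fin n → E, F x = c) ∧
    ¬ (∀ e : E, F (fun _ => e) = (e : ℝ)) := by
  obtain ⟨m, rfl⟩ : ∃ m, n = m + 2 := ⟨n - 2, by omega⟩
  obtain ⟨e⟩ := nonempty_orderIso_real_of_isOpen_of_ordConnected hne hopen hE
  have hF : ComparisonMeaningful F := fun φ =>
    hcm (fun i => φ i) fun i => ⟨(φ i).strictMono, (φ i).bijective⟩
  have hconst (x y : Fin (m + 2) → E) : F x = F y := by
    simpa using (hF.comp_orderIso e).eq_of_symmetric (fun σ x => hsym σ fun i => e (x i))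
      (fun i => e.symm (x i)) fun i => e.symm (y i)
  refine ⟨⟨F fun _ => e 0, fun x => hconst _ _⟩, fun hid => ?_⟩
  have h01 := hconst (fun _ => e 0) (fun _ => e 1)
  rw [hid, hid] at h01
  exact (e.strictMono zero_lt_one).ne (Subtype.ext h01)
end
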